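/- arXiv:2101.03114 — 9 statements merged into one kernel-verified Lean document; each statement's English description precedes it below -/
import Mathlib

section
/- Let K be an algebraically closed field and g > 1 an integer with char(K) not dividing 2(2g+1). Let b ∈ K with b ≠ 0 and b ≠ −1, and let v1(x), v2(x), v3(x) ∈ K[x] be polynomials of degree at most g such that x^{2g+1} + v1(x)^2 = (x−b)^{2g+1} + v2(x)^2 = (x+1)^{2g+1} + v3(x)^2. Then there exist g-element subsets I, J ⊆ M(2g+1) and nonzero μ, ν ∈ K such that v1(x) = (μ/2)·Η_I(x) + ((2g+1)/(2μ))·Η_{∁I}(x) = (ν/2)·Ψ_{J,b}(x) − ((2g+1)b/(2ν))·Ψ_{∁J,b}(x). -/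
/-!
Both differences of the three expressions for the common polynomial are differences of
two `(2g+1)`-th powers of linear polynomials, which split completely over the roots of unity:
`(x + 1)^(2g+1) - x^(2g+1) = (2g+1) Η_M(x)` and `x^(2g+1) - (x - b)^(2g+1) = (2g+1) b Ψ_{M,b}(x)`.
Hence `(v₁ - v₃)(v₁ + v₃)` and `(v₁ - v₂)(v₁ + v₂)` are constant multiples of products of
`2g` distinct linear factors. Both factors have degree at most `g`, so each takes exactly
`g` of the linear factors, and `v₁` is half the sum of the two factors.
-/

open Polynomial Finset

/-- `Mset K n` is the set of `n`-th roots of unity in `K` other than `1`. -/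
noncomputable def Mset (K : Type*) [Field K] (n : ℕ) : Finset K :=
  open scoped Classical in
  (Polynomial.nthRootsFinset n (1 : K)).filter (· ≠ 1)

/-- `EtaP I = ∏_{ε ∈ I} (x - η(ε))` where `η(ε) = 1/(ε - 1)`. -/
noncomputable def EtaP {K : Type*} [Field K] (I : Finset K) : K[X] :=
  ∏ ε ∈ I, (X - C ((ε - 1)⁻¹))

/-- `PsiP I b = ∏_{ε ∈ I} (x + b·η(ε))` where `η(ε) = 1/(ε - 1)`. -/
noncomputable def PsiP {K : Type*} [Field K] (I : Finset K) (b : K) : K[X] :=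
  ∏ ε ∈ I, (X + C (b * (ε - 1)⁻¹))

section Factorization

variable {K ι : Type*} [Field K]

lemma prod_X_sub_C_dvd_of_eval_eq_zero {S : Finset ι} {r : ι → K} (hr : Set.InjOn r S)
    {P : K[X]} (hP : ∀ i ∈ S, P.eval (r i) = 0) : ∏ i ∈ S, (X - C (r i)) ∣ P :=
  Finset.prod_dvd_of_coprime
    (fun _ hi _ hj hij => isCoprime_X_sub_C_of_isUnit_sub (sub_ne_zero.2 (hr.ne hi hj hij)).isUnit)
    fun i hi => dvd_iff_isRoot.2 (hP i hi)

/-- `A` is divisible by the factors at which it vanishes and `B` by all the others; the degree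
bounds leave room for exactly `m` factors on each side, so both quotients are constants. -/
lemma exists_eq_C_mul_prod_of_mul_eq [DecidableEq ι] {S : Finset ι} {r : ι → K}
    (hr : Set.InjOn r S) {m : ℕ} (hS : #S = 2 * m) {A B : K[X]} (hA : A.natDegree ≤ m)
    (hB : B.natDegree ≤ m) {c : K} (hc : c ≠ 0) (hAB : A * B = C c * ∏ i ∈ S, (X - C (r i))) :
    ∃ T ⊆ S, #T = m ∧ ∃ u v : K, u * v = c ∧
      A = C u * ∏ i ∈ T, (X - C (r i)) ∧ B = C v * ∏ i ∈ S \ T, (X - C (r i)) := by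
  classical
  set T := S.filter fun i => A.eval (r i) = 0
  have hTS : T ⊆ S := filter_subset _ _
  have hAB0 : A * B ≠ 0 := by
    rw [hAB]
    exact mul_ne_zero (C_ne_zero.2 hc) (monic_prod_X_sub_C r S).ne_zero
  have hdvdA : ∏ i ∈ T, (X - C (r i)) ∣ A :=
    prod_X_sub_C_dvd_of_eval_eq_zero (hr.mono hTS) fun i hi => (mem_filter.1 hi).2
  have hdvdB : ∏ i ∈ S \ T, (X - C (r i)) ∣ B := by
    refine prod_X_sub_C_dvd_of_eval_eq_zero (hr.mono sdiff_subset) fun i hi => ?_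
    obtain ⟨hiS, hiT⟩ := mem_sdiff.1 hi
    have hABi : A.eval (r i) * B.eval (r i) = 0 := by
      rw [← eval_mul, hAB, eval_mul, eval_prod, prod_eq_zero hiS (by simp), mul_zero]
    exact (mul_eq_zero.1 hABi).resolve_left fun h => hiT (mem_filter.2 ⟨hiS, h⟩)
  have hdegA := natDegree_le_of_dvd hdvdA (left_ne_zero_of_mul hAB0)
  have hdegB := natDegree_le_of_dvd hdvdB (right_ne_zero_of_mul hAB0)
  rw [natDegree_finsetProd_X_sub_C_eq_card] at hdegA hdegB
  have hcard := card_sdiff_add_card_eq_card hTS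
  have hA' := eq_leadingCoeff_mul_of_monic_of_dvd_of_natDegree_le (monic_prod_X_sub_C r T)
    hdvdA (by rw [natDegree_finsetProd_X_sub_C_eq_card]; omega)
  have hB' := eq_leadingCoeff_mul_of_monic_of_dvd_of_natDegree_le (monic_prod_X_sub_C r _)
    hdvdB (by rw [natDegree_finsetProd_X_sub_C_eq_card]; omega)
  refine ⟨T, hTS, by omega, A.leadingCoeff, B.leadingCoeff, ?_, hA', hB'⟩
  simpa [(monic_prod_X_sub_C r S).leadingCoeff] using congrArg leadingCoeff hAB

lemma exists_eq_of_sq_sub_sq_eq_prod [DecidableEq ι] (h2 : (2 : K) ≠ 0) {S : Finset ι}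
    {r : ι → K} (hr : Set.InjOn r S) {m : ℕ} (hS : #S = 2 * m) {P Q : K[X]}
    (hP : P.natDegree ≤ m) (hQ : Q.natDegree ≤ m) {c : K} (hc : c ≠ 0)
    (hPQ : P ^ 2 - Q ^ 2 = C c * ∏ i ∈ S, (X - C (r i))) :
    ∃ T ⊆ S, #T = m ∧ ∃ u : K, u ≠ 0 ∧
      P = C (u / 2) * ∏ i ∈ T, (X - C (r i)) + C (c / (2 * u)) * ∏ i ∈ S \ T, (X - C (r i)) := by
  obtain ⟨T, hTS, hT, u, v, huv, hsub, hadd⟩ := exists_eq_C_mul_prod_of_mul_eq hr hS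
    ((natDegree_sub_le P Q).trans (max_le hP hQ)) ((natDegree_add_le P Q).trans (max_le hP hQ))
    hc (by rw [← hPQ]; ring)
  have hu : u ≠ 0 := left_ne_zero_of_mul (huv ▸ hc)
  refine ⟨T, hTS, hT, u, hu, ?_⟩
  have hC2 : C (2⁻¹ : K) * 2 = 1 := by rw [← C_ofNat, ← C_mul, inv_mul_cancel₀ h2, C_1]
  rw [← huv, show u * v / (2 * u) = v / 2 by field_simp, div_eq_inv_mul, div_eq_inv_mul, C_mul,
    C_mul]
  linear_combination C 2⁻¹ * hsub + C 2⁻¹ * hadd - P * hC2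

end Factorization

section RootsOfUnity

variable {K : Type*} [Field K] [DecidableEq K]

lemma Mset_eq_erase (n : ℕ) : Mset K n = (nthRootsFinset n (1 : K)).erase 1 := by
  ext a
  simp [Mset, and_comm]

variable {n : ℕ} {ζ : K} (hζ : IsPrimitiveRoot ζ n) (hn : 0 < n)
include hζ hn

lemma card_Mset : #(Mset K n) = n - 1 := by
  rw [Mset_eq_erase, card_erase_of_mem (one_mem_nthRootsFinset hn), hζ.card_nthRootsFinset]

lemma prod_Mset_X_sub_C : ∏ ε ∈ Mset K n, (X - C ε) = ∑ i ∈ range n, (X : K[X]) ^ i := by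
  refine mul_left_cancel₀ (X_sub_C_ne_zero (1 : K)) ?_
  rw [Mset_eq_erase, mul_prod_erase _ (fun ε => X - C ε) (one_mem_nthRootsFinset hn),
    ← X_pow_sub_one_eq_prod hn hζ, C_1, mul_comm, geom_sum_mul]

lemma prod_Mset_one_sub : ∏ ε ∈ Mset K n, (1 - ε) = n := by
  simpa [eval_prod, eval_finsetSum] using congrArg (eval 1) (prod_Mset_X_sub_C hζ hn)

/-- Split off the root `1` in `x^n - y^n = ∏_ε (x - ε y)` and use
`x - c - ε x = (1 - ε)(x + c η(ε))` for the others. -/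
lemma X_pow_sub_X_sub_C_pow [Infinite K] (c : K) :
    X ^ n - (X - C c) ^ n = C (n * c) * PsiP (Mset K n) c := by
  refine Polynomial.funext fun x => ?_
  have hfac : ∀ ε ∈ Mset K n, x - c - ε * x = (1 - ε) * (x + c * (ε - 1)⁻¹) := by
    intro ε hε
    rw [Mset_eq_erase] at hε
    have : ε - 1 ≠ 0 := sub_ne_zero.2 (ne_of_mem_erase hε)
    field_simp
    ring
  have hpow := hζ.pow_sub_pow_eq_prod_sub_mul (x - c) x hn
  rw [← mul_prod_erase _ _ (one_mem_nthRootsFinset hn), ← Mset_eq_erase, prod_congr rfl hfac,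
    prod_mul_distrib, prod_Mset_one_sub hζ hn] at hpow
  simp only [PsiP, eval_sub, eval_pow, eval_X, eval_C, eval_mul, eval_prod, eval_add]
  linear_combination -hpow

end RootsOfUnity

section EtaPsi

variable {K : Type*} [Field K]

lemma PsiP_neg_one (I : Finset K) : PsiP I (-1) = EtaP I := by
  simp [PsiP, EtaP, sub_eq_add_neg]

lemma PsiP_eq_prod_X_sub_C (I : Finset K) (b : K) :
    PsiP I b = ∏ ε ∈ I, (X - C (-(b * (ε - 1)⁻¹))) := by
  simp [PsiP]

lemma injective_inv_sub_one : Function.Injective fun ε : K => (ε - 1)⁻¹ :=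
  inv_injective.comp sub_left_injective

end EtaPsi

theorem stmt_3_general (K : Type*) [Field K] [IsAlgClosed K] [DecidableEq K] (g : ℕ)
    (hchar : ((2 * (2 * g + 1) : ℕ) : K) ≠ 0) (b : K) (hb0 : b ≠ 0)
    (v1 v2 v3 : K[X])
    (hv1 : v1.natDegree ≤ g) (hv2 : v2.natDegree ≤ g) (hv3 : v3.natDegree ≤ g)
    (h12 : X ^ (2 * g + 1) + v1 ^ 2 = (X - C b) ^ (2 * g + 1) + v2 ^ 2)
    (h13 : X ^ (2 * g + 1) + v1 ^ 2 = (X + 1) ^ (2 * g + 1) + v3 ^ 2) :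
    ∃ (I J : Finset K), I ⊆ Mset K (2 * g + 1) ∧ J ⊆ Mset K (2 * g + 1) ∧
      I.card = g ∧ J.card = g ∧
      ∃ (μ ν : K), μ ≠ 0 ∧ ν ≠ 0 ∧
        v1 = C (μ / 2) * EtaP I +
              C (((2 * g + 1 : ℕ) : K) / (2 * μ)) * EtaP (Mset K (2 * g + 1) \ I) ∧
        v1 = C (ν / 2) * PsiP J b -
              C (((2 * g + 1 : ℕ) : K) * b / (2 * ν)) * PsiP (Mset K (2 * g + 1) \ J) b := by
  set n := 2 * g + 1
  rw [Nat.cast_mul, Nat.cast_ofNat, mul_ne_zero_iff] at hchar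
  obtain ⟨h2, hn⟩ := hchar
  obtain ⟨ζ, hζ⟩ : ∃ ζ : K, IsPrimitiveRoot ζ n :=
    have : NeZero (n : K) := ⟨hn⟩
    HasEnoughRootsOfUnity.exists_primitiveRoot K n
  have hM : #(Mset K n) = 2 * g := by rw [card_Mset hζ (by omega)]; omega
  have hEta := X_pow_sub_X_sub_C_pow hζ (by omega) (-1)
  have hPsi := X_pow_sub_X_sub_C_pow hζ (by omega) b
  rw [PsiP_neg_one, map_neg, map_one, sub_neg_eq_add, mul_neg_one, map_neg] at hEta
  rw [PsiP_eq_prod_X_sub_C] at hPsi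
  obtain ⟨I, hI, hIg, μ, hμ, hv1I⟩ := exists_eq_of_sq_sub_sq_eq_prod h2
    injective_inv_sub_one.injOn hM hv1 hv3 hn (by rw [← EtaP]; linear_combination h13 - hEta)
  obtain ⟨J, hJ, hJg, ν, hν, hv1J⟩ := exists_eq_of_sq_sub_sq_eq_prod h2
    (r := fun ε => -(b * (ε - 1)⁻¹))
    ((neg_injective.comp (mul_right_injective₀ hb0)).comp injective_inv_sub_one).injOn hM hv1 hv2
    (neg_ne_zero.2 (mul_ne_zero hn hb0)) (by rw [map_neg, neg_mul]; linear_combination h12 - hPsi)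
  refine ⟨I, J, hI, hJ, hIg, hJg, μ, ν, hμ, hν, hv1I, ?_⟩
  rw [hv1J, PsiP_eq_prod_X_sub_C, PsiP_eq_prod_X_sub_C, neg_div, map_neg]
  ring

theorem stmt_3 (K : Type*) [Field K] [IsAlgClosed K] [DecidableEq K] (g : ℕ) (hg : 1 < g)
    (hchar : ((2 * (2 * g + 1) : ℕ) : K) ≠ 0) (b : K) (hb0 : b ≠ 0) (hb1 : b ≠ -1)
    (v1 v2 v3 : K[X])
    (hv1 : v1.natDegree ≤ g) (hv2 : v2.natDegree ≤ g) (hv3 : v3.natDegree ≤ g)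
    (h12 : X ^ (2 * g + 1) + v1 ^ 2 = (X - C b) ^ (2 * g + 1) + v2 ^ 2)
    (h13 : X ^ (2 * g + 1) + v1 ^ 2 = (X + 1) ^ (2 * g + 1) + v3 ^ 2) :
    ∃ (I J : Finset K), I ⊆ Mset K (2 * g + 1) ∧ J ⊆ Mset K (2 * g + 1) ∧
      I.card = g ∧ J.card = g ∧
      ∃ (μ ν : K), μ ≠ 0 ∧ ν ≠ 0 ∧
        v1 = C (μ / 2) * EtaP I +
              C (((2 * g + 1 : ℕ) : K) / (2 * μ)) * EtaP (Mset K (2 * g + 1) \ I) ∧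
        v1 = C (ν / 2) * PsiP J b -
              C (((2 * g + 1 : ℕ) : K) * b / (2 * ν)) * PsiP (Mset K (2 * g + 1) \ J) b :=
  stmt_3_general K g hchar b hb0 v1 v2 v3 hv1 hv2 hv3 h12 h13
end

section
/- Let K be an algebraically closed field with char(K) ≠ 2, and let α, β, γ, δ, b ∈ K with b ≠ 0 and b ≠ −1. The system of equations λ1 + 1/λ1 = λ2 − b/λ2 and α·λ1 + β/λ1 = γ·λ2 − δ/λ2 has only finitely many solutions (λ1, λ2) with λ1, λ2 ∈ K nonzero if and only if the equalities α = β = γ = δ/b do not all hold. -/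
open Polynomial

lemma quad_finite {K : Type*} [Field K] (c : K) :
    {x : K | x ≠ 0 ∧ x + x⁻¹ = c}.Finite := by
  have hp : (X ^ 2 - C c * X + 1 : K[X]) ≠ 0 := by
    intro h
    have := congrArg (fun q => Polynomial.coeff q 2) h
    simp [Polynomial.coeff_one] at this
  refine (Polynomial.finite_setOf_isRoot hp).subset ?_
  rintro x ⟨hx, hxc⟩
  have hx' : x * x⁻¹ = 1 := mul_inv_cancel₀ hx
  simp only [Set.mem_setOf_eq, IsRoot, eval_add, eval_sub, eval_pow, eval_mul, eval_C, eval_X,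
    eval_one]
  linear_combination x * hxc - hx'

theorem stmt_4 (K : Type*) [Field K] [IsAlgClosed K] (hchar : ringChar K ≠ 2)
    (α β γ δ b : K) (hb0 : b ≠ 0) (hb1 : b ≠ -1) :
    {p : K × K | p.1 ≠ 0 ∧ p.2 ≠ 0 ∧
        p.1 + p.1⁻¹ = p.2 - b * p.2⁻¹ ∧
        α * p.1 + β * p.1⁻¹ = γ * p.2 - δ * p.2⁻¹}.Finite ↔
      ¬ (α = β ∧ β = γ ∧ γ = δ / b) := by
  set S := {p : K × K | p.1 ≠ 0 ∧ p.2 ≠ 0 ∧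
        p.1 + p.1⁻¹ = p.2 - b * p.2⁻¹ ∧
        α * p.1 + β * p.1⁻¹ = γ * p.2 - δ * p.2⁻¹} with hS
  have key : ∀ T : Set K, T.Finite → (∀ p : K × K, p ∈ S → p.2 ∈ T) → S.Finite := by
    intro T hT hsub
    refine (hT.biUnion (fun y _ =>
      ((quad_finite (y - b * y⁻¹)).image (fun x => (x, y))))).subset ?_
    rintro ⟨x, y⟩ hp
    obtain ⟨h1, h2, h3, h4⟩ := hp
    exact Set.mem_biUnion (hsub _ ⟨h1, h2, h3, h4⟩) ⟨x, ⟨h1, h3⟩, rfl⟩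
  constructor
  · -- finite → not all equal
    intro hfin
    rintro ⟨hab, hbc, hcd⟩
    have hδ : δ = γ * b := by field_simp at hcd; linear_combination hcd.symm
    have himg : {y : K | y ≠ 0} ⊆ Prod.snd '' S := by
      intro y hy
      have hdeg : (X ^ 2 - C (y - b * y⁻¹) * X + 1 : K[X]).degree = 2 := by
        compute_degree!
      obtain ⟨x, hxr⟩ := IsAlgClosed.exists_root (X ^ 2 - C (y - b * y⁻¹) * X + 1 : K[X])
        (by rw [hdeg]; exact two_ne_zero)
      simp only [IsRoot, eval_add, eval_sub, eval_pow, eval_mul, eval_C, eval_X, eval_one] at hxr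
      have hx0 : x ≠ 0 := by
        intro h; rw [h] at hxr; simp at hxr
      have hx' : x * x⁻¹ = 1 := mul_inv_cancel₀ hx0
      have he1 : x + x⁻¹ = y - b * y⁻¹ := by
        have hxx : x * (x + x⁻¹ - (y - b * y⁻¹)) = 0 := by
          linear_combination hxr + hx'
        have := (mul_eq_zero.mp hxx).resolve_left hx0
        linear_combination this
      refine ⟨(x, y), ⟨hx0, hy, he1, ?_⟩, rfl⟩
      show α * x + β * x⁻¹ = γ * y - δ * y⁻¹
      rw [hab, hbc, hδ]
      linear_combination γ * he1
    have hinf : {y : K | y ≠ 0}.Infinite := by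
      have : {y : K | y ≠ 0} = ({0} : Set K)ᶜ := by ext y; simp
      rw [this]
      exact (Set.finite_singleton 0).infinite_compl
    exact hinf ((hfin.image Prod.snd).subset himg)
  · intro hne
    by_cases hab : α = β
    · -- case α = β : λ₂ satisfies (α-γ) y² + (δ - α b) = 0
      have hQ : (C (α - γ) * X ^ 2 + C (δ - α * b) : K[X]) ≠ 0 := by
        intro h
        have h2 := congrArg (fun q => Polynomial.coeff q 2) h
        have h0 := congrArg (fun q => Polynomial.coeff q 0) h
        simp only [coeff_add, coeff_C_mul, coeff_X_pow, coeff_C, coeff_zero] at h2 h0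
        norm_num at h2 h0
        refine hne ⟨hab, ?_, ?_⟩
        · rw [← hab]; linear_combination h2
        · rw [eq_div_iff hb0]; linear_combination -h0 - b * h2
      refine key {y | (C (α - γ) * X ^ 2 + C (δ - α * b) : K[X]).IsRoot y}
        (Polynomial.finite_setOf_isRoot hQ) ?_
      rintro ⟨x, y⟩ ⟨h1, h2, h3, h4⟩
      dsimp only at h1 h2 h3 h4 ⊢
      simp only [Set.mem_setOf_eq, IsRoot, eval_add, eval_mul, eval_pow, eval_C, eval_X]
      have hy' : y * y⁻¹ = 1 := mul_inv_cancel₀ h2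
      have h5 : α * (y - b * y⁻¹) = γ * y - δ * y⁻¹ := by
        rw [← h3, ← h4, hab]; ring
      linear_combination y * h5 + (α * b - δ) * hy'
    · -- case α ≠ β : eliminate x
      set a4 := (γ - β) * (α - γ) with ha4
      set a2 := (γ - β) * (δ - α * b) + (β * b - δ) * (α - γ) - (α - β) ^ 2 with ha2
      set a0 := (β * b - δ) * (δ - α * b) with ha0
      have hab' : α - β ≠ 0 := sub_ne_zero.mpr hab
      have hP : (C a4 * X ^ 4 + C a2 * X ^ 2 + C a0 : K[X]) ≠ 0 := by
        intro h
        have h4' := congrArg (fun q => Polynomial.coeff q 4) h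
        have h2' := congrArg (fun q => Polynomial.coeff q 2) h
        have h0' := congrArg (fun q => Polynomial.coeff q 0) h
        simp only [coeff_add, coeff_C_mul, coeff_X_pow, coeff_C, coeff_zero] at h4' h2' h0'
        norm_num [ha4, ha2, ha0] at h4' h2' h0'
        rcases h4' with hgb | hag
        · -- γ = β
          have h2'' : (α - β) * (β * b - δ - (α - β)) = 0 := by
            linear_combination h2' + (β * b + α * b - 2 * δ) * hgb
          have hbd : β * b - δ - (α - β) = 0 :=
            (mul_eq_zero.mp h2'').resolve_left hab'
          rcases h0' with h | h
          · exact hab' (by linear_combination h - hbd)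
          · have hz : (β - α) * (b + 1) = 0 := by linear_combination hbd + h
            rcases mul_eq_zero.mp hz with h' | h'
            · exact hab (by linear_combination -h')
            · exact hb1 (by linear_combination h')
        · -- α = γ
          have h2'' : (α - β) * (δ - α * b - (α - β)) = 0 := by
            linear_combination h2' + (2 * δ - α * b - β * b) * hag
          have hbd : δ - α * b - (α - β) = 0 :=
            (mul_eq_zero.mp h2'').resolve_left hab'
          rcases h0' with h | h
          · have hz : (β - α) * (b + 1) = 0 := by linear_combination hbd + h
            rcases mul_eq_zero.mp hz with h' | h'
            · exact hab (by linear_combination -h')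
            · exact hb1 (by linear_combination h')
          · exact hab' (by linear_combination h - hbd)
      refine key {y | (C a4 * X ^ 4 + C a2 * X ^ 2 + C a0 : K[X]).IsRoot y}
        (Polynomial.finite_setOf_isRoot hP) ?_
      rintro ⟨x, y⟩ ⟨h1, h2, h3, h4⟩
      dsimp only at h1 h2 h3 h4 ⊢
      simp only [Set.mem_setOf_eq, IsRoot, eval_add, eval_mul, eval_pow, eval_C, eval_X]
      have hy' : y * y⁻¹ = 1 := mul_inv_cancel₀ h2
      have hx' : x * x⁻¹ = 1 := mul_inv_cancel₀ h1
      have hx1 : (α - β) * x = (γ * y - δ * y⁻¹) - β * (y - b * y⁻¹) := by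
        linear_combination h4 - β * h3
      have hx2 : (α - β) * x⁻¹ = α * (y - b * y⁻¹) - (γ * y - δ * y⁻¹) := by
        linear_combination α * h3 - h4
      have h5 : ((γ * y - δ * y⁻¹) - β * (y - b * y⁻¹)) *
          (α * (y - b * y⁻¹) - (γ * y - δ * y⁻¹)) = (α - β) ^ 2 := by
        calc ((γ * y - δ * y⁻¹) - β * (y - b * y⁻¹)) *
              (α * (y - b * y⁻¹) - (γ * y - δ * y⁻¹))
            = ((α - β) * x) * ((α - β) * x⁻¹) := by rw [hx1, hx2]
          _ = (α - β) ^ 2 * (x * x⁻¹) := by ring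
          _ = (α - β) ^ 2 := by rw [hx']; ring
      have h6 : ((γ - β) * y ^ 2 + (β * b - δ)) * ((α - γ) * y ^ 2 + (δ - α * b))
          = (α - β) ^ 2 * y ^ 2 := by
        field_simp at h5
        linear_combination h5
      rw [ha4, ha2, ha0]
      linear_combination h6
end

section
/- Let K be an algebraically closed field with char(K) ≠ 2, and let α, β, γ, δ, b ∈ K with b ≠ 0 and b ≠ −1. If the set of solutions (λ1, λ2), with λ1, λ2 ∈ K nonzero, of the system λ1 + 1/λ1 = λ2 − b/λ2 and α·λ1 + β/λ1 = γ·λ2 − δ/λ2 is finite, then it has at most 9 elements. -/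
open Polynomial in
lemma quartic_finset {K : Type*} [Field K] (a b c d e : K)
    (h : ¬(a = 0 ∧ b = 0 ∧ c = 0 ∧ d = 0 ∧ e = 0)) :
    ∃ F : Finset K, F.card ≤ 4 ∧
      ∀ x : K, a*x^4 + b*x^3 + c*x^2 + d*x + e = 0 → x ∈ F := by
  classical
  set p : K[X] := C a * X^4 + C b * X^3 + C c * X^2 + C d * X + C e with hp
  have hc4 : p.coeff 4 = a := by simp [hp, coeff_X_pow, coeff_C]
  have hc3 : p.coeff 3 = b := by simp [hp, coeff_X_pow, coeff_C]
  have hc2 : p.coeff 2 = c := by simp [hp, coeff_X_pow, coeff_C]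
  have hc1 : p.coeff 1 = d := by simp [hp, coeff_X_pow, coeff_C]
  have hc0 : p.coeff 0 = e := by simp [hp, coeff_X_pow, coeff_C]
  have hp0 : p ≠ 0 := by
    intro h0
    exact h ⟨by rw [← hc4, h0, coeff_zero], by rw [← hc3, h0, coeff_zero],
      by rw [← hc2, h0, coeff_zero], by rw [← hc1, h0, coeff_zero],
      by rw [← hc0, h0, coeff_zero]⟩
  have hdeg : p.natDegree ≤ 4 := by rw [hp]; compute_degree
  refine ⟨p.roots.toFinset, ?_, ?_⟩
  · exact le_trans (Multiset.toFinset_card_le _) (le_trans (card_roots' p) hdeg)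
  · intro x hx
    rw [Multiset.mem_toFinset, mem_roots hp0]
    show p.eval x = 0
    simp only [hp, eval_add, eval_mul, eval_pow, eval_C, eval_X]
    linear_combination hx

open Polynomial in
lemma quadratic_finset {K : Type*} [Field K] (a b c : K)
    (h : ¬(a = 0 ∧ b = 0 ∧ c = 0)) :
    ∃ F : Finset K, F.card ≤ 2 ∧
      ∀ x : K, a*x^2 + b*x + c = 0 → x ∈ F := by
  classical
  set p : K[X] := C a * X^2 + C b * X + C c with hp
  have hc2 : p.coeff 2 = a := by simp [hp, coeff_X_pow, coeff_C]
  have hc1 : p.coeff 1 = b := by simp [hp, coeff_X_pow, coeff_C]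
  have hc0 : p.coeff 0 = c := by simp [hp, coeff_X_pow, coeff_C]
  have hp0 : p ≠ 0 := by
    intro h0
    exact h ⟨by rw [← hc2, h0, coeff_zero], by rw [← hc1, h0, coeff_zero],
      by rw [← hc0, h0, coeff_zero]⟩
  have hdeg : p.natDegree ≤ 2 := by rw [hp]; compute_degree
  refine ⟨p.roots.toFinset, ?_, ?_⟩
  · exact le_trans (Multiset.toFinset_card_le _) (le_trans (card_roots' p) hdeg)
  · intro x hx
    rw [Multiset.mem_toFinset, mem_roots hp0]
    show p.eval x = 0
    simp only [hp, eval_add, eval_mul, eval_pow, eval_C, eval_X]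
    linear_combination hx

lemma coeffs_nonzero {K : Type*} [Field K] (α β γ δ b : K) (hb1 : b ≠ -1)
    (hab : α - β ≠ 0) :
    ¬((γ-β)*(γ-α) = 0 ∧ (0:K) = 0 ∧
      (α-β)^2 - (γ-β)*(δ-α*b) - (γ-α)*(δ-β*b) = 0 ∧ (0:K) = 0 ∧
      (δ-β*b)*(δ-α*b) = 0) := by
  rintro ⟨ha0, -, hc0, -, he0⟩
  have habsq : (α-β)^2 ≠ 0 := pow_ne_zero _ hab
  have hb1' : 1 + b ≠ 0 := fun h => hb1 (by linear_combination h)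
  rcases mul_eq_zero.mp ha0 with hg | hg <;>
    rcases mul_eq_zero.mp he0 with hd | hd
  · exact habsq (by linear_combination hc0 + (δ-α*b)*hg + (γ-α)*hd)
  · have h : (1+b)*(α-β)^2 = 0 := by
      linear_combination hc0 + (2*δ-α*b-β*b)*hg + (β-α)*hd
    rcases mul_eq_zero.mp h with h | h
    exacts [hb1' h, habsq h]
  · have h : (1+b)*(α-β)^2 = 0 := by
      linear_combination hc0 + (2*δ-β*b-α*b)*hg + (α-β)*hd
    rcases mul_eq_zero.mp h with h | h
    exacts [hb1' h, habsq h]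
  · exact habsq (by linear_combination hc0 + (δ-β*b)*hg + (γ-β)*hd)

theorem stmt_6 (K : Type*) [Field K] [IsAlgClosed K] (hchar : ringChar K ≠ 2)
    (α β γ δ b : K) (hb0 : b ≠ 0) (hb1 : b ≠ -1)
    (hfin : {p : K × K | p.1 ≠ 0 ∧ p.2 ≠ 0 ∧
        p.1 + p.1⁻¹ = p.2 - b * p.2⁻¹ ∧
        α * p.1 + β * p.1⁻¹ = γ * p.2 - δ * p.2⁻¹}.Finite) :
    {p : K × K | p.1 ≠ 0 ∧ p.2 ≠ 0 ∧
        p.1 + p.1⁻¹ = p.2 - b * p.2⁻¹ ∧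
        α * p.1 + β * p.1⁻¹ = γ * p.2 - δ * p.2⁻¹}.ncard ≤ 9 := by
  set S : Set (K × K) := {p : K × K | p.1 ≠ 0 ∧ p.2 ≠ 0 ∧
        p.1 + p.1⁻¹ = p.2 - b * p.2⁻¹ ∧
        α * p.1 + β * p.1⁻¹ = γ * p.2 - δ * p.2⁻¹} with hS
  have hclear : ∀ p ∈ S, p.1^2*p.2 + p.2 - p.1*p.2^2 + b*p.1 = 0 ∧
      α*p.1^2*p.2 + β*p.2 - γ*p.1*p.2^2 + δ*p.1 = 0 := by
    rintro ⟨x, y⟩ ⟨hx, hy, e1, e2⟩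
    have hxx : x * x⁻¹ = 1 := mul_inv_cancel₀ hx
    have hyy : y * y⁻¹ = 1 := mul_inv_cancel₀ hy
    constructor
    · linear_combination x*y*e1 - y*hxx - b*x*hyy
    · linear_combination x*y*e2 - β*y*hxx - δ*x*hyy
  by_cases hab : α = β
  · -- case α = β
    have key2 : ∀ p ∈ S, (γ-α)*p.2^2 - (δ-α*b) = 0 := by
      rintro ⟨x, y⟩ hp
      obtain ⟨e1', e2'⟩ := hclear _ hp
      obtain ⟨hx, -, -, -⟩ := hp
      have h2x : x * ((γ-α)*y^2 - (δ-α*b)) = 0 := by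
        linear_combination α*e1' - e2' - y*hab
      exact (mul_eq_zero.mp h2x).resolve_left hx
    by_cases hgd : γ = α ∧ δ = α*b
    · -- degenerate: infinitely many solutions, contradiction
      exfalso
      obtain ⟨hg, hd⟩ := hgd
      have hex : ∀ x : K, x ≠ 0 → ∃ y : K, (x, y) ∈ S := by
        intro x hx
        have hdeg : (Polynomial.X^2 - Polynomial.C (x + x⁻¹) * Polynomial.X
            - Polynomial.C b : Polynomial K).degree = 2 := by
          compute_degree!
        obtain ⟨z, hz⟩ := IsAlgClosed.exists_root
          (Polynomial.X^2 - Polynomial.C (x + x⁻¹) * Polynomial.X - Polynomial.C b)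
          (by rw [hdeg]; decide)
        have hzeval : z^2 - (x + x⁻¹)*z - b = 0 := by
          have := hz
          simp only [Polynomial.IsRoot, Polynomial.eval_sub, Polynomial.eval_mul,
            Polynomial.eval_pow, Polynomial.eval_C, Polynomial.eval_X] at this
          linear_combination this
        have hz0 : z ≠ 0 := by
          intro h0
          rw [h0] at hzeval
          exact hb0 (by linear_combination -hzeval)
        have hzz : z * z⁻¹ = 1 := mul_inv_cancel₀ hz0
        have e1 : x + x⁻¹ = z - b * z⁻¹ := by
          linear_combination (-z⁻¹)*hzeval + (z - x - x⁻¹)*hzz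
        refine ⟨z, hx, hz0, e1, ?_⟩
        linear_combination α*e1 - x⁻¹*hab - z*hg + z⁻¹*hd
      have hSinf : S.Infinite := by
        have hinf : ({x : K | x ≠ 0}).Infinite := by
          have h1 : ({0}ᶜ : Set K).Infinite := (Set.finite_singleton 0).infinite_compl
          have h2 : ({0}ᶜ : Set K) = {x : K | x ≠ 0} := by ext t; simp
          rwa [h2] at h1
        have : Infinite ({x : K | x ≠ 0}) := hinf.to_subtype
        exact Set.infinite_of_injective_forall_mem
          (f := fun x : {x : K | x ≠ 0} => ((x : K), Classical.choose (hex x x.2)))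
          (fun u v h => Subtype.ext (congrArg Prod.fst h))
          (fun u => Classical.choose_spec (hex u u.2))
      exact hSinf hfin
    · -- non-degenerate
      by_cases hg : γ = α
      · have hd : δ ≠ α*b := fun hd => hgd ⟨hg, hd⟩
        have hSempty : S = ∅ := by
          ext p
          simp only [Set.mem_empty_iff_false, iff_false]
          intro hp
          have h := key2 p hp
          rw [hg] at h
          exact hd (by linear_combination -h)
        rw [hSempty]; simp
      · have hga : γ - α ≠ 0 := sub_ne_zero.mpr hg
        set m : K := (δ-α*b)/(γ-α) with hm
        have hm' : m*(γ-α) = δ-α*b := div_mul_cancel₀ _ hga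
        have hym : ∀ p ∈ S, p.2^2 = m := by
          intro p hp
          have h := key2 p hp
          have h2 : (γ-α)*(p.2^2 - m) = 0 := by linear_combination h - hm'
          have h3 := (mul_eq_zero.mp h2).resolve_left hga
          linear_combination h3
        by_cases hm0 : m = 0
        · have hSempty : S = ∅ := by
            ext p
            simp only [Set.mem_empty_iff_false, iff_false]
            intro hp
            have h := hym p hp
            rw [hm0] at h
            exact hp.2.1 (pow_eq_zero_iff (n := 2) (by norm_num) |>.mp h)
          rw [hSempty]; simp
        · obtain ⟨FX, hFX, hFXmem⟩ := quartic_finset m 0 (2*m - (m-b)^2) 0 m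
            (fun h => hm0 h.1)
          obtain ⟨FY, hFY, hFYmem⟩ := quadratic_finset (γ-α) 0 (α*b-δ)
            (fun h => hga h.1)
          have hsub : S ⊆ ↑(FX ×ˢ FY) := by
            rintro ⟨x, y⟩ hp
            obtain ⟨e1', -⟩ := hclear _ hp
            have hy2 : y^2 = m := hym _ hp
            have h1' : (x^2+1)*y = (m-b)*x := by linear_combination e1' + x*hy2
            have hqx : m*x^4 + 0*x^3 + (2*m - (m-b)^2)*x^2 + 0*x + m = 0 := by
              linear_combination ((x^2+1)*y + (m-b)*x)*h1' - (x^2+1)^2*hy2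
            have hqy : (γ-α)*y^2 + 0*y + (α*b-δ) = 0 := by
              linear_combination key2 _ hp
            rw [Finset.coe_product]
            exact ⟨hFXmem x hqx, hFYmem y hqy⟩
          calc S.ncard ≤ (↑(FX ×ˢ FY) : Set (K × K)).ncard :=
                Set.ncard_le_ncard hsub (FX ×ˢ FY).finite_toSet
            _ = (FX ×ˢ FY).card := Set.ncard_coe_finset _
            _ = FX.card * FY.card := Finset.card_product _ _
            _ ≤ 4 * 2 := Nat.mul_le_mul hFX hFY
            _ ≤ 9 := by norm_num
  · -- case α ≠ β
    have hab' : α - β ≠ 0 := sub_ne_zero.mpr hab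
    obtain ⟨F, hF4, hFmem⟩ := quartic_finset ((γ-β)*(γ-α)) 0
      ((α-β)^2 - (γ-β)*(δ-α*b) - (γ-α)*(δ-β*b)) 0 ((δ-β*b)*(δ-α*b))
      (coeffs_nonzero α β γ δ b hb1 hab')
    have hrel : ∀ p ∈ S, (α-β)*(p.1*p.2) = (γ-β)*p.2^2 - (δ-β*b) ∧
        ((γ-β)*(γ-α))*p.2^4 + 0*p.2^3 +
          ((α-β)^2 - (γ-β)*(δ-α*b) - (γ-α)*(δ-β*b))*p.2^2 + 0*p.2 +
          ((δ-β*b)*(δ-α*b)) = 0 := by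
      rintro ⟨x, y⟩ hp
      obtain ⟨e1', e2'⟩ := hclear _ hp
      obtain ⟨hx, hy, -, -⟩ := hp
      have h1x : x * ((α-β)*(x*y) - ((γ-β)*y^2 - (δ-β*b))) = 0 := by
        linear_combination e2' - β*e1'
      have h1 : (α-β)*(x*y) = (γ-β)*y^2 - (δ-β*b) := by
        have h := (mul_eq_zero.mp h1x).resolve_left hx
        linear_combination h
      have h2 : (β-α)*y = x*((γ-α)*y^2 - (δ-α*b)) := by
        linear_combination e2' - α*e1'
      have h3 : ((α-β)*(x*y)) * ((β-α)*y) =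
          ((γ-β)*y^2 - (δ-β*b)) * (x*((γ-α)*y^2 - (δ-α*b))) := by
        rw [h1, h2]
      have h4 : x * (((γ-β)*(γ-α))*y^4 + 0*y^3 +
          ((α-β)^2 - (γ-β)*(δ-α*b) - (γ-α)*(δ-β*b))*y^2 + 0*y +
          ((δ-β*b)*(δ-α*b))) * y = 0 := by
        linear_combination (-y)*h3
      refine ⟨h1, ?_⟩
      rcases mul_eq_zero.mp h4 with h5 | h5
      · exact (mul_eq_zero.mp h5).resolve_left hx
      · exact absurd h5 hy
    have hinj : Set.InjOn Prod.snd S := by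
      rintro ⟨x, y⟩ hp ⟨x', y'⟩ hq (h : y = y')
      subst h
      obtain ⟨h1, -⟩ := hrel _ hp
      obtain ⟨h1', -⟩ := hrel _ hq
      have hy : y ≠ 0 := hp.2.1
      have heq : (α-β)*(x*y) = (α-β)*(x'*y) := by rw [h1, h1']
      have hxx' : x = x' :=
        mul_right_cancel₀ hy (mul_left_cancel₀ hab' heq)
      rw [hxx']
    have himg : Prod.snd '' S ⊆ ↑F := by
      rintro y ⟨p, hp, rfl⟩
      exact hFmem _ (hrel p hp).2
    calc S.ncard = (Prod.snd '' S).ncard := (Set.ncard_image_of_injOn hinj).symm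
      _ ≤ (↑F : Set K).ncard := Set.ncard_le_ncard himg F.finite_toSet
      _ = F.card := Set.ncard_coe_finset _
      _ ≤ 4 := hF4
      _ ≤ 9 := by norm_num
end

section
/- Let K be a field with char(K) ≠ 2 and b ∈ K with b ≠ 0 and b ≠ −1. Then the polynomial λ1²·λ2 − λ1·λ2² + b·λ1 + λ2 is irreducible in the polynomial ring K[λ1, λ2]. -/
/-!
Viewed as a quadratic in `λ₁` over `K[λ₂]`, the polynomial is `λ₂ λ₁² + (b - λ₂²) λ₁ + λ₂`.
Its content divides `λ₂` and `b - λ₂²`, hence the unit `b`, so by Gauss's lemma it suffices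
that it has no root in `K(λ₂)`. A root would make the discriminant
`(b - λ₂²)² - 4 λ₂² = λ₂⁴ - (2b + 4) λ₂² + b²` a square in `K(λ₂)`, hence in the integrally
closed `K[λ₂]`; comparing coefficients, `X⁴ + p X² + q` is a square only if `p² = 4q`, which
here means `16 (b + 1) = 0`.
-/

open scoped Polynomial

namespace Polynomial

theorem sq_eq_four_mul_of_sq_eq_X_pow_four_add {R : Type*} [CommRing R] [IsDomain R]
    (h2 : (2 : R) ≠ 0) {p q : R} {y : R[X]} (hy : y ^ 2 = X ^ 4 + C p * X ^ 2 + C q) :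
    p ^ 2 = 4 * q := by
  have hdeg : y.natDegree = 2 := by
    have h := congrArg natDegree hy
    rw [natDegree_pow, show (X ^ 4 + C p * X ^ 2 + C q : R[X]).natDegree = 4 by
      compute_degree!] at h
    omega
  obtain ⟨a, c, d, rfl⟩ : ∃ a c d : R, y = C a * X ^ 2 + C c * X + C d :=
    ⟨y.coeff 2, y.coeff 1, y.coeff 0, by
      conv_lhs => rw [as_sum_range_C_mul_X_pow y, hdeg]
      simp only [Finset.sum_range_succ, Finset.range_zero, Finset.sum_empty, pow_zero, pow_one,
        mul_one, zero_add]
      ring⟩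
  have hsq : (C a * X ^ 2 + C c * X + C d) ^ 2 = C (a ^ 2) * X ^ 4 + C (2 * a * c) * X ^ 3
      + C (c ^ 2 + 2 * a * d) * X ^ 2 + C (2 * c * d) * X + C (d ^ 2) := by
    simp only [map_add, map_mul, map_pow, map_ofNat]; ring
  rw [hsq] at hy
  have hcoeff (n : ℕ) := congrArg (coeff · n) hy
  simp only [coeff_add, coeff_C_mul_X_pow, coeff_C_mul_X, coeff_C, coeff_X_pow] at hcoeff
  obtain ⟨ha, hac, hp, hq⟩ : a ^ 2 = 1 ∧ 2 * a * c = 0 ∧ c ^ 2 + 2 * a * d = p ∧ d ^ 2 = q := by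
    have e4 := hcoeff 4
    have e3 := hcoeff 3
    have e2 := hcoeff 2
    have e0 := hcoeff 0
    simp only [↓reduceIte, Nat.reduceEqDiff, add_zero, zero_add] at e4 e3 e2 e0
    exact ⟨e4, e3, e2, e0⟩
  have hc : c = 0 := by
    have ha0 : a ≠ 0 := by rintro rfl; simp at ha
    simpa [h2, ha0] using hac
  rw [← hp, ← hq, hc]
  linear_combination (4 * d ^ 2) * ha

theorem irreducible_quadratic_of_not_isSquare_discrim {A : Type*} [CommRing A] [IsDomain A]
    [IsGCDMonoid A] {a b c : A} (ha : a ≠ 0)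
    (hprim : (C a * X ^ 2 + C b * X + C c).IsPrimitive) (hdisc : ¬IsSquare (discrim a b c)) :
    Irreducible (C a * X ^ 2 + C b * X + C c) := by
  let F := FractionRing A
  let φ := algebraMap A F
  have hφa : φ a ≠ 0 := (map_ne_zero_iff φ (IsFractionRing.injective A F)).mpr ha
  rw [hprim.irreducible_iff_irreducible_map_fraction_map (K := F)]
  simp only [Polynomial.map_add, Polynomial.map_mul, Polynomial.map_pow, map_C, map_X]
  rw [irreducible_iff_roots_eq_zero_of_degree_le_three (by rw [natDegree_quadratic hφa])
    (by rw [natDegree_quadratic hφa]; norm_num), Multiset.eq_zero_iff_forall_notMem]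
  intro x hx
  have hroot : φ a * (x * x) + φ b * x + φ c = 0 := by
    have := (mem_roots'.mp hx).2
    simp only [IsRoot.def, eval_add, eval_mul, eval_C, eval_pow, eval_X] at this
    linear_combination this
  -- `2 a x + b` squares into `A`, hence is integral over the integrally closed `A`.
  have hsq : φ (discrim a b c) = (2 * φ a * x + φ b) ^ 2 := by
    rw [← discrim_eq_sq_of_quadratic_eq_zero hroot]
    simp only [discrim, map_sub, map_mul, map_pow, map_ofNat]
  obtain ⟨s, hs⟩ := IsIntegrallyClosed.exists_algebraMap_eq_of_isIntegral_pow (R := A) two_pos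
    (hsq ▸ isIntegral_algebraMap)
  exact hdisc ⟨s, IsFractionRing.injective A F (by rw [hsq, map_mul, hs, sq])⟩

theorem irreducible_C_X_mul_X_sq_add_C_sub_X_sq_mul_X_add_C_X {K : Type*} [Field K]
    (h2 : (2 : K) ≠ 0) {b : K} (hb0 : b ≠ 0) (hb1 : b ≠ -1) :
    Irreducible (C X * X ^ 2 + C (C b - X ^ 2) * X + C X : K[X][X]) := by
  refine irreducible_quadratic_of_not_isSquare_discrim X_ne_zero ?_ ?_
  · intro r hr
    rw [C_dvd_iff_dvd_coeff] at hr
    simp only [coeff_add, coeff_C_mul_X_pow, coeff_C_mul_X, coeff_C] at hr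
    have hX : r ∣ X := by simpa using hr 0
    have hbX : r ∣ C b - X ^ 2 := by simpa using hr 1
    have hCb : r ∣ C b := by simpa using dvd_add hbX (dvd_pow hX two_ne_zero)
    exact isUnit_of_dvd_unit hCb (isUnit_C.mpr hb0.isUnit)
  · rintro ⟨y, hy⟩
    have hy' : y ^ 2 = X ^ 4 + C (-(2 * b + 4)) * X ^ 2 + C (b ^ 2) := by
      rw [sq, ← hy, discrim]
      simp only [map_neg, map_add, map_mul, map_pow, map_ofNat]
      ring
    have h16 : 16 * (b + 1) = 0 := by
      linear_combination sq_eq_four_mul_of_sq_eq_X_pow_four_add h2 hy'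
    have : (16 : K) ≠ 0 := by simpa [show (16 : K) = 2 ^ 4 by norm_num] using h2
    exact hb1 (eq_neg_of_add_eq_zero_left ((mul_eq_zero.mp h16).resolve_left this))

end Polynomial

namespace MvPolynomial

variable (R : Type*) [CommSemiring R]

noncomputable def finTwoAlgEquiv : MvPolynomial (Fin 2) R ≃ₐ[R] R[X][X] :=
  (finSuccEquiv R 1).trans (Polynomial.mapAlgEquiv (uniqueAlgEquiv R (Fin 1)))

@[simp]
theorem finTwoAlgEquiv_X_zero : finTwoAlgEquiv R (X 0) = Polynomial.X := by
  simp [finTwoAlgEquiv, finSuccEquiv_X_zero]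

@[simp]
theorem finTwoAlgEquiv_X_one : finTwoAlgEquiv R (X 1) = Polynomial.C Polynomial.X := by
  rw [show (1 : Fin 2) = Fin.succ 0 from rfl, finTwoAlgEquiv, AlgEquiv.trans_apply,
    finSuccEquiv_X_succ]
  simp

@[simp]
theorem finTwoAlgEquiv_C (r : R) :
    finTwoAlgEquiv R (C r) = Polynomial.C (Polynomial.C r) :=
  (finTwoAlgEquiv R).commutes r

end MvPolynomial

open MvPolynomial

theorem stmt_7 (K : Type*) [Field K] (hchar : ringChar K ≠ 2)
    (b : K) (hb0 : b ≠ 0) (hb1 : b ≠ -1) :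
    Irreducible ((X 0) ^ 2 * X 1 - X 0 * (X 1) ^ 2 + C b * X 0 + X 1 :
      MvPolynomial (Fin 2) K) := by
  rw [← MulEquiv.irreducible_iff (finTwoAlgEquiv K)]
  simp only [map_add, map_sub, map_mul, map_pow, finTwoAlgEquiv_X_zero, finTwoAlgEquiv_X_one,
    finTwoAlgEquiv_C]
  convert Polynomial.irreducible_C_X_mul_X_sq_add_C_sub_X_sq_mul_X_add_C_X
    (Ring.two_ne_zero hchar) hb0 hb1 using 1
  simp only [Polynomial.C_sub, Polynomial.C_pow]
  ring
end

section
/- Let K be a field with char(K) ≠ 2 and b ∈ K with b ≠ 0 and b ≠ −1. Then the polynomial λ2⁴ − (2b+4)·λ2² + b² ∈ K[λ2] is not the square of any polynomial in K[λ2]. -/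
open Polynomial

theorem stmt_8 (K : Type*) [Field K] (hchar : ringChar K ≠ 2)
    (b : K) (hb0 : b ≠ 0) (hb1 : b ≠ -1) :
    ¬ ∃ q : K[X], (X ^ 4 - C (2 * b + 4) * X ^ 2 + C (b ^ 2) : K[X]) = q ^ 2 := by
  rintro ⟨q, h⟩
  have h2 : (2 : K) ≠ 0 := Ring.two_ne_zero hchar
  have hdeg : q.natDegree = 2 := by
    have hp : (X ^ 4 - C (2 * b + 4) * X ^ 2 + C (b ^ 2) : K[X]).natDegree = 4 := by
      compute_degree!
    rw [h, natDegree_pow] at hp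
    omega
  have h3 : q.coeff 3 = 0 := coeff_eq_zero_of_natDegree_lt (by omega)
  have h4' : q.coeff 4 = 0 := coeff_eq_zero_of_natDegree_lt (by omega)
  have h' : (X ^ 4 - C (2 * b + 4) * X ^ 2 + C (b ^ 2) : K[X]) = q * q := by
    rw [h, sq]
  have e4 := congrArg (fun p => coeff p 4) h'
  have e3 := congrArg (fun p => coeff p 3) h'
  have e2 := congrArg (fun p => coeff p 2) h'
  have e0 := congrArg (fun p => coeff p 0) h'
  simp only [coeff_add, coeff_sub, coeff_C_mul, coeff_X_pow, coeff_C] at e4 e3 e2 e0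
  simp only [coeff_mul, Finset.Nat.sum_antidiagonal_eq_sum_range_succ_mk,
    Finset.sum_range_succ, Finset.sum_range_zero, h3, h4'] at e4 e3 e2 e0
  norm_num at e4 e3 e2 e0
  set a0 := q.coeff 0
  set a1 := q.coeff 1
  set a2 := q.coeff 2
  have ha2 : a2 * a2 = 1 := e4.symm
  have ha2' : a2 ≠ 0 := by
    intro hz
    rw [hz, zero_mul] at ha2
    exact zero_ne_one ha2
  have ha1 : a1 = 0 := by
    have hz : a2 * (2 * a1) = 0 := by linear_combination -e3
    rcases mul_eq_zero.mp hz with hh | hh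
    · exact absurd hh ha2'
    · rcases mul_eq_zero.mp hh with hh | hh
      · exact absurd hh h2
      · exact hh
  have key : a0 * a2 = -(b + 2) := by
    have hk : a0 * a2 * 2 = -(b + 2) * 2 := by
      rw [ha1] at e2; linear_combination -e2
    exact mul_right_cancel₀ h2 hk
  have hsq : b ^ 2 = (b + 2) ^ 2 := by
    have := congrArg (fun x => x * x) key
    calc b ^ 2 = (a0 * a0) * (a2 * a2) := by rw [ha2, ← e0]; ring
    _ = (b + 2) ^ 2 := by linear_combination this
  have : 4 * (b + 1) = 0 := by linear_combination -hsq
  rcases mul_eq_zero.mp this with hh | hh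
  · have : (4 : K) = 2 * 2 := by norm_num
    rw [this] at hh
    exact h2 (by rcases mul_eq_zero.mp hh with h | h <;> exact h)
  · exact hb1 (by linear_combination hh)
end

section
/- Let K be a field, g ≥ 1 an integer, and γ, δ ∈ K, and let α_1, …, α_g, β_1, …, β_g be nonzero elements of K. Consider the polynomial in the variable b given by F(b) = ∏_{i=1}^g (γ + b·α_i) · ∏_{j=1}^g (δ + b·β_j) − ∏_{i=1}^g (δ + b·α_i) · ∏_{j=1}^g (γ + b·β_j). Then the coefficient of b^{2g−1} in F equals α_1⋯α_g · β_1⋯β_g · (γ − δ) · ((1/α_1 + ⋯ + 1/α_g) − (1/β_1 + ⋯ + 1/β_g)). -/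
open Polynomial Finset

lemma aux_factor {K : Type*} [Field K] (g : ℕ) (c : K) (a : Fin g → K)
    (ha : ∀ i, a i ≠ 0) :
    (∏ i, (C c + C (a i) * X) : K[X]) = C (∏ i, a i) * ∏ i, (X + C (c * (a i)⁻¹)) := by
  rw [map_prod, ← Finset.prod_mul_distrib]
  refine Finset.prod_congr rfl fun i _ => ?_
  rw [mul_add, ← C_mul, mul_comm c, ← mul_assoc, mul_inv_cancel₀ (ha i), one_mul]
  ring

lemma aux_coeff_top {K : Type*} [Field K] (g : ℕ) (c : K) (a : Fin g → K)
    (ha : ∀ i, a i ≠ 0) :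
    (∏ i, (C c + C (a i) * X) : K[X]).coeff g = ∏ i, a i := by
  rw [aux_factor g c a ha, coeff_C_mul, Finset.prod_X_add_C_coeff _ _ (by simp)]
  simp

lemma aux_coeff_sub1 {K : Type*} [Field K] (g : ℕ) (hg : 1 ≤ g) (c : K) (a : Fin g → K)
    (ha : ∀ i, a i ≠ 0) :
    (∏ i, (C c + C (a i) * X) : K[X]).coeff (g - 1)
      = (∏ i, a i) * (c * ∑ i, (a i)⁻¹) := by
  rw [aux_factor g c a ha, coeff_C_mul,
    Finset.prod_X_add_C_coeff _ _ (by simp)]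
  have h1 : #(univ : Finset (Fin g)) - (g - 1) = 1 := by simp; omega
  rw [h1, Finset.powersetCard_one, Finset.sum_map]
  simp only [Function.Embedding.coeFn_mk, Finset.prod_singleton]
  rw [← Finset.mul_sum]

lemma aux_coeff_mul {K : Type*} [CommRing K] (g : ℕ) (hg : 1 ≤ g) (P Q : K[X])
    (hP : P.natDegree ≤ g) (hQ : Q.natDegree ≤ g) :
    (P * Q).coeff (2 * g - 1) = P.coeff (g - 1) * Q.coeff g + P.coeff g * Q.coeff (g - 1) := by
  rw [coeff_mul, Finset.Nat.sum_antidiagonal_eq_sum_range_succ_mk]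
  have h2 : (2 * g - 1).succ = 2 * g := by omega
  rw [h2]
  have hsub : ({g - 1, g} : Finset ℕ) ⊆ Finset.range (2 * g) := by
    intro x hx; simp at hx ⊢; omega
  have hzero : ∀ x ∈ Finset.range (2 * g), x ∉ ({g - 1, g} : Finset ℕ) →
      P.coeff (x, 2 * g - 1 - x).1 * Q.coeff (x, 2 * g - 1 - x).2 = 0 := by
    intro x hx hx2
    simp only [Finset.mem_range] at hx
    simp only [Finset.mem_insert, Finset.mem_singleton, not_or] at hx2
    rcases lt_or_ge x g with h | h
    · have h3 : g < 2 * g - 1 - x := by omega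
      rw [coeff_eq_zero_of_natDegree_lt (lt_of_le_of_lt hQ h3), mul_zero]
    · have h3 : g < x := by omega
      rw [coeff_eq_zero_of_natDegree_lt (lt_of_le_of_lt hP h3), zero_mul]
  rw [← Finset.sum_subset hsub hzero, Finset.sum_pair (by omega : g - 1 ≠ g)]
  have e1 : 2 * g - 1 - (g - 1) = g := by omega
  have e2 : 2 * g - 1 - g = g - 1 := by omega
  rw [e1, e2]

theorem stmt_10 (K : Type*) [Field K] (g : ℕ) (hg : 1 ≤ g)
    (γ δ : K) (α β : Fin g → K) (hα : ∀ i, α i ≠ 0) (hβ : ∀ j, β j ≠ 0) :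
    ((∏ i, (C γ + C (α i) * X)) * (∏ j, (C δ + C (β j) * X)) -
        (∏ i, (C δ + C (α i) * X)) * (∏ j, (C γ + C (β j) * X)) : K[X]).coeff (2 * g - 1)
      = (∏ i, α i) * (∏ j, β j) * (γ - δ) * ((∑ i, (α i)⁻¹) - (∑ j, (β j)⁻¹)) := by
  have hdeg : ∀ (c : K) (a : Fin g → K), (∏ i, (C c + C (a i) * X) : K[X]).natDegree ≤ g := by
    intro c a
    refine le_trans (Polynomial.natDegree_prod_le _ _) ?_
    calc ∑ i : Fin g, (C c + C (a i) * X : K[X]).natDegree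
        ≤ ∑ _i : Fin g, 1 := Finset.sum_le_sum fun i _ => by
          refine le_trans (Polynomial.natDegree_add_le _ _) ?_
          simp [Polynomial.natDegree_C_mul_le]
          exact le_trans (Polynomial.natDegree_C_mul_le _ _) (by simp)
      _ = g := by simp
  rw [coeff_sub, aux_coeff_mul g hg _ _ (hdeg _ _) (hdeg _ _),
    aux_coeff_mul g hg _ _ (hdeg _ _) (hdeg _ _),
    aux_coeff_top g γ α hα, aux_coeff_top g δ α hα,
    aux_coeff_top g δ β hβ, aux_coeff_top g γ β hβ,
    aux_coeff_sub1 g hg γ α hα, aux_coeff_sub1 g hg δ α hα,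
    aux_coeff_sub1 g hg δ β hβ, aux_coeff_sub1 g hg γ β hβ]
  ring
end

section
/- Let K be an algebraically closed field of characteristic 0 and g > 1 an integer. Then for every subset J ⊆ M(2g+1), the sum ∑_{ε ∈ J} 1/(ε − 1) is not equal to −(2g+1)/2. -/
open Polynomial Finset

/-!
For a root of unity `ε ≠ 1` of order dividing `n`, summing `1 - ε ^ i = (1 - ε) ∑_{j<i} ε ^ j`
over `i < n` (where `∑_{i<n} ε ^ i = 0`) gives `n = (1 - ε) · ∑_{i<n} ∑_{j<i} ε ^ j`, so
`n / (ε - 1)` is an algebraic integer. Hence `n · ∑_{ε ∈ J} 1/(ε - 1)` is an algebraic integer,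
whereas `n · (-n/2) = -n²/2` is a rational number that is not an integer when `n = 2g + 1` is odd.
-/

lemma pow_eq_one_and_ne_one_of_mem_Mset {K : Type*} [Field K] {n : ℕ} {ε : K}
    (h : ε ∈ Mset K n) :
    ε ^ n = 1 ∧ ε ≠ 1 := by
  rcases n.eq_zero_or_pos with rfl | hn
  · simp [Mset, nthRootsFinset_zero] at h
  · simp only [Mset, mem_filter, mem_nthRootsFinset hn] at h
    exact h

lemma natCast_eq_one_sub_mul_sum_geom_sum {K : Type*} [Field K] {n : ℕ} {ε : K}
    (hpow : ε ^ n = 1) (hne : ε ≠ 1) :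
    (n : K) = (1 - ε) * ∑ i ∈ range n, ∑ j ∈ range i, ε ^ j := by
  have hgeom : ∑ i ∈ range n, ε ^ i = 0 := by simp [geom_sum_eq hne, hpow]
  rw [mul_sum]
  simp_rw [mul_neg_geom_sum]
  simp [sum_sub_distrib, hgeom]

lemma isIntegral_natCast_mul_inv_sub_one {K : Type*} [Field K] {n : ℕ} {ε : K}
    (hpow : ε ^ n = 1) (hne : ε ≠ 1) : IsIntegral ℤ ((n : K) * (ε - 1)⁻¹) := by
  rcases n.eq_zero_or_pos with rfl | hn
  · simpa using isIntegral_zero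
  have hε : IsIntegral ℤ ε := IsIntegral.of_pow hn (hpow ▸ isIntegral_one)
  have hsub : (1 : K) - ε ≠ 0 := sub_ne_zero.mpr hne.symm
  have heq : (n : K) * (ε - 1)⁻¹ = -∑ i ∈ range n, ∑ j ∈ range i, ε ^ j := by
    rw [natCast_eq_one_sub_mul_sum_geom_sum hpow hne, ← neg_sub 1 ε, inv_neg, mul_neg,
      mul_comm, inv_mul_cancel_left₀ hsub]
  rw [heq]
  exact (IsIntegral.sum _ fun i _ => IsIntegral.sum _ fun j _ => hε.pow j).neg

lemma not_isIntegral_intCast_div_two {m : ℤ} (hm : Odd m) : ¬ IsIntegral ℤ ((m : ℚ) / 2) := by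
  intro h
  obtain ⟨k, hk⟩ := IsIntegrallyClosed.isIntegral_iff.mp h
  rw [eq_intCast] at hk
  have : m = 2 * k := by
    exact_mod_cast (by rw [hk]; ring : (m : ℚ) = 2 * k)
  exact Int.not_even_iff_odd.mpr hm ⟨k, by omega⟩

theorem stmt_11_general (K : Type*) [Field K] [CharZero K]
    (g : ℕ) :
    ∀ J ⊆ Mset K (2 * g + 1),
      ∑ ε ∈ J, (ε - 1)⁻¹ ≠ -(((2 * g + 1 : ℕ) : K) / 2) := by
  intro J hJ h
  set n : ℕ := 2 * g + 1
  have hint : IsIntegral ℤ ((n : K) * ∑ ε ∈ J, (ε - 1)⁻¹) := by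
    rw [mul_sum]
    refine IsIntegral.sum _ fun ε hε => ?_
    obtain ⟨hpow, hne⟩ := pow_eq_one_and_ne_one_of_mem_Mset (hJ hε)
    exact isIntegral_natCast_mul_inv_sub_one hpow hne
  have hval : (n : K) * -((n : K) / 2) = algebraMap ℚ K ((-((n : ℤ) ^ 2) : ℤ) / 2) := by
    push_cast
    norm_num
    ring
  rw [h, hval, isIntegral_algebraMap_iff (algebraMap ℚ K).injective] at hint
  refine not_isIntegral_intCast_div_two ?_ hint
  have hodd : Odd (n : ℤ) := by simp [n, parity_simps]
  exact hodd.pow.neg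

theorem stmt_11 (K : Type*) [Field K] [IsAlgClosed K] [CharZero K]
    (g : ℕ) (hg : 1 < g) :
    ∀ J ⊆ Mset K (2 * g + 1),
      ∑ ε ∈ J, (ε - 1)⁻¹ ≠ -(((2 * g + 1 : ℕ) : K) / 2) :=
  stmt_11_general K g
end

section
/- Let K be an algebraically closed field and g > 1 an integer with char(K) not dividing 2(2g+1). Let I, J ⊆ M(2g+1) be g-element subsets, b ∈ K, and λ1, λ2 nonzero elements of K such that λ1·Η_I(x) + (1/λ1)·Η_{∁I}(x) = λ2·Ψ_{J,b}(x) − (b/λ2)·Ψ_{∁J,b}(x) holds in K[x]. Let ε1, ε2 be distinct elements of I and ε3, ε4 distinct elements of ∁I, and set η_i = η(ε_i). Then [Η_{∁I}, Ψ_{J,b}]_{η1,η2} · [Η_I, Ψ_{∁J,b}]_{η3,η4} = [Ψ_{J,b}, Ψ_{∁J,b}]_{η1,η2} · [Ψ_{J,b}, Ψ_{∁J,b}]_{η3,η4} · b. -/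
open Polynomial Finset

/-- `[r, s]_{γ,δ} = r(γ)s(δ) - r(δ)s(γ)`. -/
noncomputable def brkt {K : Type*} [Field K] (r s : K[X]) (γ δ : K) : K :=
  r.eval γ * s.eval δ - r.eval δ * s.eval γ

/-!
On the roots `η(ε)`, `ε ∈ I`, of `Η_I` the assumed identity reads
`Η_{∁I} = λ₁ (λ₂ Ψ_J - (b/λ₂) Ψ_{∁J})`, and on the roots of `Η_{∁I}` it reads
`Η_I = λ₁⁻¹ (λ₂ Ψ_J - (b/λ₂) Ψ_{∁J})`. Since the bracket `[r, s]_{γ,δ}` is bilinear and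
alternating, `[Η_{∁I}, Ψ_J]_{η₁,η₂} = (λ₁ b/λ₂) [Ψ_J, Ψ_{∁J}]_{η₁,η₂}` and
`[Η_I, Ψ_{∁J}]_{η₃,η₄} = (λ₂/λ₁) [Ψ_J, Ψ_{∁J}]_{η₃,η₄}`; the factors multiply to `b`.
-/

section

variable {K : Type*} [Field K]

theorem EtaP_eval_inv_sub_one {I : Finset K} {ε : K} (h : ε ∈ I) :
    (EtaP I).eval (ε - 1)⁻¹ = 0 := by
  rw [EtaP, eval_prod]
  exact prod_eq_zero h (by simp)

theorem eval_eq_of_linear_comb_of_eval_left_eq_zero {A B R : K[X]} {a γ : K}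
    (h : C a * A + C a⁻¹ * B = R) (ha : a ≠ 0) (hA : A.eval γ = 0) :
    B.eval γ = a * R.eval γ := by
  rw [← h]
  simp only [eval_add, eval_mul, eval_C, hA]
  field_simp
  ring

theorem eval_eq_of_linear_comb_of_eval_right_eq_zero {A B R : K[X]} {a γ : K}
    (h : C a * A + C a⁻¹ * B = R) (ha : a ≠ 0) (hB : B.eval γ = 0) :
    A.eval γ = a⁻¹ * R.eval γ := by
  rw [← h]
  simp only [eval_add, eval_mul, eval_C, hB]
  field_simp
  ring

variable {r p q : K[X]} {u c d γ δ : K}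

theorem brkt_left_eq_of_eval_eq (hγ : r.eval γ = u * (C c * p - C d * q).eval γ)
    (hδ : r.eval δ = u * (C c * p - C d * q).eval δ) :
    brkt r p γ δ = u * d * brkt p q γ δ := by
  simp only [brkt, hγ, hδ, eval_sub, eval_mul, eval_C]
  ring

theorem brkt_right_eq_of_eval_eq (hγ : r.eval γ = u * (C c * p - C d * q).eval γ)
    (hδ : r.eval δ = u * (C c * p - C d * q).eval δ) :
    brkt r q γ δ = u * c * brkt p q γ δ := by
  simp only [brkt, hγ, hδ, eval_sub, eval_mul, eval_C]
  ring

end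

theorem stmt_15_general (K : Type*) [Field K] [DecidableEq K]
    (g : ℕ)
    (I J : Finset K)
    (b : K) (l1 l2 : K) (hl1 : l1 ≠ 0) (hl2 : l2 ≠ 0)
    (heq : C l1 * EtaP I + C l1⁻¹ * EtaP (Mset K (2 * g + 1) \ I) =
      C l2 * PsiP J b - C (b * l2⁻¹) * PsiP (Mset K (2 * g + 1) \ J) b)
    (ε1 ε2 ε3 ε4 : K) (h1 : ε1 ∈ I) (h2 : ε2 ∈ I)
    (h3 : ε3 ∈ Mset K (2 * g + 1) \ I) (h4 : ε4 ∈ Mset K (2 * g + 1) \ I)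
    (η1 η2 η3 η4 : K)
    (hη1 : η1 = (ε1 - 1)⁻¹) (hη2 : η2 = (ε2 - 1)⁻¹)
    (hη3 : η3 = (ε3 - 1)⁻¹) (hη4 : η4 = (ε4 - 1)⁻¹) :
    brkt (EtaP (Mset K (2 * g + 1) \ I)) (PsiP J b) η1 η2 *
      brkt (EtaP I) (PsiP (Mset K (2 * g + 1) \ J) b) η3 η4 =
    brkt (PsiP J b) (PsiP (Mset K (2 * g + 1) \ J) b) η1 η2 *
      brkt (PsiP J b) (PsiP (Mset K (2 * g + 1) \ J) b) η3 η4 * b := by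
  subst hη1 hη2 hη3 hη4
  have hB ε (h : ε ∈ I) := eval_eq_of_linear_comb_of_eval_left_eq_zero heq hl1
    (EtaP_eval_inv_sub_one h)
  have hA ε (h : ε ∈ Mset K (2 * g + 1) \ I) :=
    eval_eq_of_linear_comb_of_eval_right_eq_zero heq hl1 (EtaP_eval_inv_sub_one h)
  rw [brkt_left_eq_of_eval_eq (hB ε1 h1) (hB ε2 h2),
    brkt_right_eq_of_eval_eq (hA ε3 h3) (hA ε4 h4)]
  field_simp

theorem stmt_15 (K : Type*) [Field K] [IsAlgClosed K] [DecidableEq K]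
    (g : ℕ) (hg : 1 < g)
    (hchar : ((2 * (2 * g + 1) : ℕ) : K) ≠ 0)
    (I J : Finset K) (hI : I ⊆ Mset K (2 * g + 1)) (hJ : J ⊆ Mset K (2 * g + 1))
    (hIcard : I.card = g) (hJcard : J.card = g)
    (b : K) (l1 l2 : K) (hl1 : l1 ≠ 0) (hl2 : l2 ≠ 0)
    (heq : C l1 * EtaP I + C l1⁻¹ * EtaP (Mset K (2 * g + 1) \ I) =
      C l2 * PsiP J b - C (b * l2⁻¹) * PsiP (Mset K (2 * g + 1) \ J) b)
    (ε1 ε2 ε3 ε4 : K) (h1 : ε1 ∈ I) (h2 : ε2 ∈ I) (h12 : ε1 ≠ ε2)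
    (h3 : ε3 ∈ Mset K (2 * g + 1) \ I) (h4 : ε4 ∈ Mset K (2 * g + 1) \ I) (h34 : ε3 ≠ ε4)
    (η1 η2 η3 η4 : K)
    (hη1 : η1 = (ε1 - 1)⁻¹) (hη2 : η2 = (ε2 - 1)⁻¹)
    (hη3 : η3 = (ε3 - 1)⁻¹) (hη4 : η4 = (ε4 - 1)⁻¹) :
    brkt (EtaP (Mset K (2 * g + 1) \ I)) (PsiP J b) η1 η2 *
      brkt (EtaP I) (PsiP (Mset K (2 * g + 1) \ J) b) η3 η4 =
    brkt (PsiP J b) (PsiP (Mset K (2 * g + 1) \ J) b) η1 η2 *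
      brkt (PsiP J b) (PsiP (Mset K (2 * g + 1) \ J) b) η3 η4 * b :=
  stmt_15_general K g I J b l1 l2 hl1 hl2 heq ε1 ε2 ε3 ε4 h1 h2 h3 h4 η1 η2 η3 η4 hη1 hη2 hη3 hη4
end

section
/- Let K be an algebraically closed field and g > 1 an integer with char(K) not dividing 2(2g+1). Let I, J ⊆ M(2g+1) be g-element subsets and b ∈ K with b ≠ 0 and b ≠ −1. Then the set of pairs (λ1, λ2) of nonzero elements of K satisfying the polynomial identity λ1·Η_I(x) + (1/λ1)·Η_{∁I}(x) = λ2·Ψ_{J,b}(x) − (b/λ2)·Ψ_{∁J,b}(x) in K[x] is finite and has at most 9 elements. -/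
open Polynomial Finset

/-!
Comparing the coefficients of two degrees `i, j` of the identity `λ₁ A + λ₁⁻¹ B = λ₂ P - b λ₂⁻¹ Q`
(Cramer's rule, possible because the distinct monic polynomials `P, Q` are linearly independent)
expresses both `λ₂` and `b λ₂⁻¹` as `c λ₁ + c' λ₁⁻¹`. The first determines `λ₂` from `λ₁`; the
product of the two eliminates `λ₂` and leaves a quartic equation for `λ₁`. If that quartic vanishes
identically, `λ₂` is a constant multiple of `λ₁` or of `λ₁⁻¹`, the identity becomes
`λ₁² F = G`, and `b ≠ -1` rules out `F = G = 0`, so `λ₁²` is fixed. Either way there are at most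
four solutions. For `Ψ_J ≠ Ψ_{∁J}` it suffices that their root sets are disjoint.
-/

def coeffMinor {R : Type*} [CommRing R] (i j : ℕ) (F G : R[X]) : R :=
  F.coeff i * G.coeff j - F.coeff j * G.coeff i

section CommRing

variable {R : Type*} [CommRing R]

theorem Polynomial.Monic.eq_one_of_eq_C_mul {A P : R[X]} {c : R} (hA : A.Monic) (hP : P.Monic)
    (h : A = C c * P) : c = 1 := by
  simpa [hA.leadingCoeff, leadingCoeff_mul_monic hP] using (congrArg Polynomial.leadingCoeff h).symm

theorem Polynomial.Monic.exists_coeffMinor_ne_zero {P Q : R[X]} (hP : P.Monic) (hQ : Q.Monic)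
    (hPQ : P ≠ Q) : ∃ i j, coeffMinor i j P Q ≠ 0 := by
  by_contra! h
  -- all minors against the leading coefficient of `P` vanish, so `Q` is a multiple of `P`
  have hQP : Q = C (Q.coeff P.natDegree) * P := by
    ext k
    have := h k P.natDegree
    rw [coeffMinor, hP.coeff_natDegree] at this
    rw [coeff_C_mul]
    linear_combination -this
  rw [hQ.eq_one_of_eq_C_mul hP hQP, map_one, one_mul] at hQP
  exact hPQ hQP.symm

-- Cramer's rule applied to the coefficients of degrees `i` and `j`.
theorem coeffMinor_eqs_of_eq {u u' v w : R} {A B P Q : R[X]}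
    (h : C u * A + C u' * B = C v * P - C w * Q) (i j : ℕ) :
    u * coeffMinor i j A Q + u' * coeffMinor i j B Q = v * coeffMinor i j P Q ∧
      u * coeffMinor i j P A + u' * coeffMinor i j P B = -(w * coeffMinor i j P Q) := by
  have hk (k : ℕ) : u * A.coeff k + u' * B.coeff k = v * P.coeff k - w * Q.coeff k := by
    simpa only [coeff_add, coeff_sub, coeff_C_mul] using congrArg (coeff · k) h
  unfold coeffMinor
  constructor
  · linear_combination Q.coeff j * hk i - Q.coeff i * hk j
  · linear_combination P.coeff i * hk j - P.coeff j * hk i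

end CommRing

theorem eq_of_C_mul_eq_of_C_mul_eq {R : Type*} [CommRing R] [IsDomain R] {x y : R} {F G : R[X]}
    (hx : C x * F = G) (hy : C y * F = G) (hFG : ¬(F = 0 ∧ G = 0)) : x = y := by
  by_cases hF : F = 0
  · exact absurd ⟨hF, by rw [← hx, hF, mul_zero]⟩ hFG
  · exact C_injective (mul_right_cancel₀ hF (hx.trans hy.symm))

def solutionSet {K : Type*} [Field K] (b : K) (A B P Q : K[X]) : Set (K × K) :=
  {p | p.1 ≠ 0 ∧ p.2 ≠ 0 ∧ C p.1 * A + C p.1⁻¹ * B = C p.2 * P - C (b * p.2⁻¹) * Q}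

namespace solutionSet

variable {K : Type*} [Field K] {b κ : K} {A B P Q : K[X]}

theorem injOn_fst (hP : P.Monic) (hQ : Q.Monic) (hPQ : P ≠ Q) :
    Set.InjOn Prod.fst (solutionSet b A B P Q) := by
  obtain ⟨i, j, hΔ⟩ := hP.exists_coeffMinor_ne_zero hQ hPQ
  intro p hp p' hp' h
  have hv := (coeffMinor_eqs_of_eq hp.2.2 i j).1
  have hv' := (coeffMinor_eqs_of_eq hp'.2.2 i j).1
  rw [h] at hv
  exact Prod.ext h (mul_right_cancel₀ hΔ (hv.symm.trans hv'))

theorem sq_fst_eq_of_snd_eq_mul_fst (hb : b ≠ -1) (hA : A.Monic) (hB : B.Monic) (hP : P.Monic)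
    (hQ : Q.Monic) (hκ : ∀ p ∈ solutionSet b A B P Q, p.2 = κ * p.1) {p p' : K × K}
    (hp : p ∈ solutionSet b A B P Q) (hp' : p' ∈ solutionSet b A B P Q) :
    p.1 ^ 2 = p'.1 ^ 2 := by
  have key : ∀ q ∈ solutionSet b A B P Q,
      C (q.1 ^ 2) * (A - C κ * P) = -(B + C (b * κ⁻¹) * Q) := by
    rintro ⟨u, v⟩ hq
    obtain ⟨hu, -, heq⟩ := id hq
    rw [hκ _ hq] at heq
    have huC : C u * C u⁻¹ = 1 := by rw [← map_mul, mul_inv_cancel₀ hu, map_one]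
    simp only [mul_inv, map_mul, map_pow] at heq ⊢
    linear_combination C u * heq - (B + C b * C κ⁻¹ * Q) * huC
  refine eq_of_C_mul_eq_of_C_mul_eq (key p hp) (key p' hp') fun ⟨hF, hG⟩ => hb ?_
  have hκ1 : κ = 1 := hA.eq_one_of_eq_C_mul hP (sub_eq_zero.1 hF)
  have hbκ : -(b * κ⁻¹) = 1 :=
    hB.eq_one_of_eq_C_mul hQ <| by
      rw [map_neg, neg_mul]
      exact add_eq_zero_iff_eq_neg.1 (neg_eq_zero.1 hG)
  rw [hκ1, inv_one, mul_one] at hbκ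
  exact neg_eq_iff_eq_neg.1 hbκ

theorem sq_fst_eq_of_snd_eq_mul_inv_fst (hb : b ≠ -1) (hA : A.Monic) (hB : B.Monic)
    (hP : P.Monic) (hQ : Q.Monic) (hκ : ∀ p ∈ solutionSet b A B P Q, p.2 = κ * p.1⁻¹)
    {p p' : K × K} (hp : p ∈ solutionSet b A B P Q) (hp' : p' ∈ solutionSet b A B P Q) :
    p.1 ^ 2 = p'.1 ^ 2 := by
  have key : ∀ q ∈ solutionSet b A B P Q,
      C (q.1 ^ 2) * (A + C (b * κ⁻¹) * Q) = C κ * P - B := by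
    rintro ⟨u, v⟩ hq
    obtain ⟨hu, -, heq⟩ := id hq
    rw [hκ _ hq] at heq
    have huC : C u * C u⁻¹ = 1 := by rw [← map_mul, mul_inv_cancel₀ hu, map_one]
    simp only [mul_inv, inv_inv, map_mul, map_pow] at heq ⊢
    linear_combination C u * heq - (B - C κ * P) * huC
  refine eq_of_C_mul_eq_of_C_mul_eq (key p hp) (key p' hp') fun ⟨hF, hG⟩ => hb ?_
  have hbκ : -(b * κ⁻¹) = 1 :=
    hA.eq_one_of_eq_C_mul hQ (by rw [map_neg, neg_mul]; exact add_eq_zero_iff_eq_neg.1 hF)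
  have hκ1 : κ = 1 := hB.eq_one_of_eq_C_mul hP (sub_eq_zero.1 hG).symm
  rw [hκ1, inv_one, mul_one] at hbκ
  exact neg_eq_iff_eq_neg.1 hbκ

theorem sq_fst_eq_of_coeffMinor_eq_zero (hb : b ≠ -1) (hA : A.Monic) (hB : B.Monic)
    (hP : P.Monic) (hQ : Q.Monic) {i j : ℕ} (hΔ : coeffMinor i j P Q ≠ 0)
    (hc : coeffMinor i j A Q = 0 ∨ coeffMinor i j B Q = 0) {p p' : K × K}
    (hp : p ∈ solutionSet b A B P Q) (hp' : p' ∈ solutionSet b A B P Q) :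
    p.1 ^ 2 = p'.1 ^ 2 := by
  rcases hc with hc | hc
  · refine sq_fst_eq_of_snd_eq_mul_inv_fst hb hA hB hP hQ
      (κ := coeffMinor i j B Q / coeffMinor i j P Q) (fun q hq => ?_) hp hp'
    have hv := (coeffMinor_eqs_of_eq hq.2.2 i j).1
    rw [hc] at hv
    field_simp
    linear_combination -hv
  · refine sq_fst_eq_of_snd_eq_mul_fst hb hA hB hP hQ
      (κ := coeffMinor i j A Q / coeffMinor i j P Q) (fun q hq => ?_) hp hp'
    have hv := (coeffMinor_eqs_of_eq hq.2.2 i j).1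
    rw [hc] at hv
    field_simp
    linear_combination -hv

theorem exists_poly_isRoot_fst (hb₀ : b ≠ 0) (hb₁ : b ≠ -1) (hA : A.Monic) (hB : B.Monic)
    (hP : P.Monic) (hQ : Q.Monic) (hPQ : P ≠ Q) :
    ∃ R : K[X], R ≠ 0 ∧ R.natDegree ≤ 4 ∧ ∀ p ∈ solutionSet b A B P Q, R.IsRoot p.1 := by
  obtain ⟨i, j, hΔ⟩ := hP.exists_coeffMinor_ne_zero hQ hPQ
  set Δ := coeffMinor i j P Q
  set c₁ := coeffMinor i j A Q
  set c₂ := coeffMinor i j B Q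
  set d₁ := coeffMinor i j P A
  set d₂ := coeffMinor i j P B
  -- `λ₁²` times the product of the two Cramer identities is `R(λ₁) = 0`
  set R : K[X] := C (c₁ * d₁) * X ^ 4 + C (c₁ * d₂ + c₂ * d₁ + b * Δ ^ 2) * X ^ 2 + C (c₂ * d₂)
  by_cases hR : R = 0
  · have hc : c₁ = 0 ∨ c₂ = 0 := by
      by_contra! hc
      have hd₁ : d₁ = 0 := by
        simpa [R, coeff_C_mul_X_pow, coeff_C, -map_mul, -map_add, hc.1]
          using congrArg (coeff · 4) hR
      have hd₂ : d₂ = 0 := by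
        simpa [R, coeff_C_mul_X_pow, coeff_C, -map_mul, -map_add, hc.2]
          using congrArg (coeff · 0) hR
      simp [R, hd₁, hd₂, hb₀, hΔ] at hR
    rcases (solutionSet b A B P Q).eq_empty_or_nonempty with hS | ⟨p₀, hp₀⟩
    · exact ⟨1, one_ne_zero, by simp, by simp [hS]⟩
    · refine ⟨X ^ 2 - C (p₀.1 ^ 2), (monic_X_pow_sub_C _ two_ne_zero).ne_zero,
        by compute_degree!, fun p hp => ?_⟩
      simp [sq_fst_eq_of_coeffMinor_eq_zero hb₁ hA hB hP hQ hΔ hc hp hp₀]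
  · refine ⟨R, hR, by simp only [R]; compute_degree, fun p hp => ?_⟩
    obtain ⟨hu, hv, heq⟩ := hp
    obtain ⟨h₁, h₂⟩ := coeffMinor_eqs_of_eq heq i j
    have hprod : (p.1 * c₁ + p.1⁻¹ * c₂) * (p.1 * d₁ + p.1⁻¹ * d₂) = -(b * Δ ^ 2) := by
      rw [h₁, h₂]
      linear_combination -(b * Δ ^ 2) * mul_inv_cancel₀ hv
    field_simp at hprod
    simp only [R, IsRoot, eval_add, eval_mul, eval_pow, eval_C, eval_X]
    linear_combination hprod

theorem finite_and_ncard_le_four (hb₀ : b ≠ 0) (hb₁ : b ≠ -1) (hA : A.Monic) (hB : B.Monic)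
    (hP : P.Monic) (hQ : Q.Monic) (hPQ : P ≠ Q) :
    (solutionSet b A B P Q).Finite ∧ (solutionSet b A B P Q).ncard ≤ 4 := by
  classical
  obtain ⟨R, hR₀, hR₄, hR⟩ := exists_poly_isRoot_fst hb₀ hb₁ hA hB hP hQ hPQ
  have hinj : Set.InjOn Prod.fst (solutionSet b A B P Q) := injOn_fst hP hQ hPQ
  have hsub : Prod.fst '' solutionSet b A B P Q ⊆ (R.roots.toFinset : Set K) := by
    rintro _ ⟨p, hp, rfl⟩
    simpa [hR₀] using hR p hp
  refine ⟨.of_finite_image (R.roots.toFinset.finite_toSet.subset hsub) hinj, ?_⟩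
  calc (solutionSet b A B P Q).ncard = (Prod.fst '' solutionSet b A B P Q).ncard :=
        hinj.ncard_image.symm
    _ ≤ R.roots.toFinset.card := by simpa using Set.ncard_le_ncard hsub (finite_toSet _)
    _ ≤ R.natDegree := R.roots.toFinset_card_le.trans R.card_roots'
    _ ≤ 4 := hR₄

end solutionSet

section

variable {K : Type*} [Field K]

theorem monic_EtaP (I : Finset K) : (EtaP I).Monic :=
  monic_prod_of_monic _ _ fun _ _ => monic_X_sub_C _

theorem monic_PsiP (I : Finset K) (b : K) : (PsiP I b).Monic :=
  monic_prod_of_monic _ _ fun _ _ => monic_X_add_C _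

theorem PsiP_ne_of_disjoint {J J' : Finset K} {b : K} (hb : b ≠ 0) (hJ : J.Nonempty)
    (hJJ' : Disjoint J J') : PsiP J b ≠ PsiP J' b := by
  have root_iff (L : Finset K) (x : K) :
      (PsiP L b).IsRoot x ↔ ∃ ε ∈ L, x = -(b * (ε - 1)⁻¹) := by
    simp only [PsiP, IsRoot, eval_prod, prod_eq_zero_iff, eval_add, eval_X, eval_C,
      add_eq_zero_iff_eq_neg]
  obtain ⟨ε₀, hε₀⟩ := hJ
  intro h
  obtain ⟨ε, hε, hεε₀⟩ := (root_iff J' _).1 (h ▸ (root_iff J _).2 ⟨ε₀, hε₀, rfl⟩)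
  have : ε₀ = ε := by simpa [hb] using hεε₀
  exact disjoint_left.1 hJJ' hε₀ (this ▸ hε)

end

theorem stmt_17_general (K : Type*) [Field K] [DecidableEq K]
    (g : ℕ) (hg : 1 < g)
    (I J : Finset K)
    (hJcard : J.card = g)
    (b : K) (hb0 : b ≠ 0) (hb1 : b ≠ -1) :
    {p : K × K | p.1 ≠ 0 ∧ p.2 ≠ 0 ∧
        C p.1 * EtaP I + C p.1⁻¹ * EtaP (Mset K (2 * g + 1) \ I) =
          C p.2 * PsiP J b - C (b * p.2⁻¹) * PsiP (Mset K (2 * g + 1) \ J) b}.Finite ∧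
    {p : K × K | p.1 ≠ 0 ∧ p.2 ≠ 0 ∧
        C p.1 * EtaP I + C p.1⁻¹ * EtaP (Mset K (2 * g + 1) \ I) =
          C p.2 * PsiP J b - C (b * p.2⁻¹) * PsiP (Mset K (2 * g + 1) \ J) b}.ncard ≤ 9 := by
  have hJ : J.Nonempty := card_pos.1 (by omega)
  obtain ⟨hfin, hcard⟩ := solutionSet.finite_and_ncard_le_four hb0 hb1 (monic_EtaP I)
    (monic_EtaP _) (monic_PsiP J b) (monic_PsiP _ b) (PsiP_ne_of_disjoint hb0 hJ disjoint_sdiff)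
  exact ⟨hfin, hcard.trans (by norm_num)⟩

theorem stmt_17 (K : Type*) [Field K] [IsAlgClosed K] [DecidableEq K]
    (g : ℕ) (hg : 1 < g)
    (hchar : ((2 * (2 * g + 1) : ℕ) : K) ≠ 0)
    (I J : Finset K) (hI : I ⊆ Mset K (2 * g + 1)) (hJ : J ⊆ Mset K (2 * g + 1))
    (hIcard : I.card = g) (hJcard : J.card = g)
    (b : K) (hb0 : b ≠ 0) (hb1 : b ≠ -1) :
    {p : K × K | p.1 ≠ 0 ∧ p.2 ≠ 0 ∧
        C p.1 * EtaP I + C p.1⁻¹ * EtaP (Mset K (2 * g + 1) \ I) =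
          C p.2 * PsiP J b - C (b * p.2⁻¹) * PsiP (Mset K (2 * g + 1) \ J) b}.Finite ∧
    {p : K × K | p.1 ≠ 0 ∧ p.2 ≠ 0 ∧
        C p.1 * EtaP I + C p.1⁻¹ * EtaP (Mset K (2 * g + 1) \ I) =
          C p.2 * PsiP J b - C (b * p.2⁻¹) * PsiP (Mset K (2 * g + 1) \ J) b}.ncard ≤ 9 :=
  stmt_17_general K g hg I J hJcard b hb0 hb1
end
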